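/- For every t ≥ 0 and every x ∈ ℝ² with x ≠ 0, the Oseen vortex velocity field satisfies the pointwise bound |Θ(x,t)| ≤ min( 1/(2π|x|), |x|/(8π(1+t)) ). Consequently Θ(·,t) belongs to weak-L²: for every t ≥ 0, sup_{λ > 0} λ ( meas{ x ∈ ℝ² : |Θ(x,t)| > λ } )^{1/2} ≤ 1/(2√π). -/

import Mathlib

open MeasureTheory Real
open scoped ENNReal

noncomputable section

abbrev E2 := EuclideanSpace ℝ (Fin 2)

/-- The rotation `x ↦ x^⊥ = (-x₂, x₁)`. -/
noncomputable def perp (x : E2) : E2 :=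
  (WithLp.equiv 2 (Fin 2 → ℝ)).symm ![-(x 1), x 0]

/-- The Oseen vortex velocity field `Θ(x,t)`. -/
noncomputable def Theta (t : ℝ) (x : E2) : E2 :=
  ((1 / (2 * π)) * (1 - Real.exp (-‖x‖ ^ 2 / (4 * (1 + t)))) / ‖x‖ ^ 2) • perp x

/-- The Oseen vorticity `Ξ(x,t)`. -/
noncomputable def Xi (t : ℝ) (x : E2) : ℝ :=
  (1 / (4 * π * (1 + t))) * Real.exp (-‖x‖ ^ 2 / (4 * (1 + t)))

/-- A smooth radially symmetric cut-off function, nondecreasing along rays,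
vanishing on `{‖x‖ ≤ ρ}` and equal to `1` on `{‖x‖ ≥ M}`. -/
structure IsCutoff (χ : E2 → ℝ) (ρ M : ℝ) : Prop where
  smooth : ContDiff ℝ (⊤ : ℕ∞) χ
  mem01 : ∀ x : E2, χ x ∈ Set.Icc (0 : ℝ) 1
  radial_mono : ∀ x y : E2, ‖x‖ ≤ ‖y‖ → χ x ≤ χ y
  zero_near : ∀ x : E2, ‖x‖ ≤ ρ → χ x = 0
  one_far : ∀ x : E2, M ≤ ‖x‖ → χ x = 1
  rho_pos : 0 < ρ
  rho_lt_M : ρ < M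

/-- The truncated Oseen vortex `u^χ(x,t) = χ(x) Θ(x,t)`. -/
noncomputable def uchi (χ : E2 → ℝ) (t : ℝ) (x : E2) : E2 := χ x • Theta t x

/-- The Laplacian of a scalar function on `ℝ²`. -/
noncomputable def lap (f : E2 → ℝ) (x : E2) : ℝ :=
  ∑ i : Fin 2, fderiv ℝ (fun y => fderiv ℝ f y (EuclideanSpace.single i 1)) x
    (EuclideanSpace.single i 1)

/-- The remainder term `R^χ(x,t) = Θ Δχ + 2 ((x·∇χ)/|x|²)(x^⊥ Ξ − Θ)`. -/
noncomputable def Rchi (χ : E2 → ℝ) (t : ℝ) (x : E2) : E2 :=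
  lap χ x • Theta t x + (2 * fderiv ℝ χ x x / ‖x‖ ^ 2) • (Xi t x • perp x - Theta t x)


lemma norm_perp' (x : E2) : ‖perp x‖ = ‖x‖ := by
  simp only [EuclideanSpace.norm_eq, perp, WithLp.equiv_symm_apply, PiLp.toLp_apply, Fin.sum_univ_two]
  simp [sq_abs]; ring_nf

lemma perp_zero' : perp (0 : E2) = 0 := by
  ext i
  fin_cases i <;> simp [perp]

lemma Theta_pointwise' (t : ℝ) (ht : 0 ≤ t) (x : E2) (hx : x ≠ 0) :
    ‖Theta t x‖ ≤ min (1 / (2 * π * ‖x‖)) (‖x‖ / (8 * π * (1 + t))) := by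
  have hr : 0 < ‖x‖ := norm_pos_iff.mpr hx
  have h1t : (0:ℝ) < 1 + t := by linarith
  have hexp : Real.exp (-‖x‖ ^ 2 / (4 * (1 + t))) ≤ 1 := by
    apply Real.exp_le_one_iff.mpr
    apply div_nonpos_of_nonpos_of_nonneg (neg_nonpos.mpr (by positivity)) (by positivity)
  have hexp2 : 1 - ‖x‖ ^ 2 / (4 * (1 + t)) ≤ Real.exp (-‖x‖ ^ 2 / (4 * (1 + t))) := by
    have := Real.add_one_le_exp (-‖x‖ ^ 2 / (4 * (1 + t)))
    rw [neg_div] at this ⊢; linarith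
  have hnorm : ‖Theta t x‖ =
      (1 / (2 * π)) * (1 - Real.exp (-‖x‖ ^ 2 / (4 * (1 + t)))) / ‖x‖ := by
    rw [Theta, norm_smul, norm_perp', Real.norm_eq_abs, abs_of_nonneg (by
      apply div_nonneg (mul_nonneg (by positivity) (sub_nonneg.mpr hexp)) (by positivity))]
    field_simp
  rw [hnorm]
  refine le_min ?_ ?_
  · rw [div_le_div_iff₀ hr (by positivity)]
    have h2 : 1 - Real.exp (-‖x‖ ^ 2 / (4 * (1 + t))) ≤ 1 := by
      linarith [Real.exp_pos (-‖x‖ ^ 2 / (4 * (1 + t)))]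
    calc 1 / (2 * π) * (1 - Real.exp (-‖x‖ ^ 2 / (4 * (1 + t)))) * (2 * π * ‖x‖)
        ≤ 1 / (2 * π) * 1 * (2 * π * ‖x‖) := by
          apply mul_le_mul_of_nonneg_right _ (by positivity)
          apply mul_le_mul_of_nonneg_left h2 (by positivity)
      _ = 1 * ‖x‖ := by field_simp
  · rw [div_le_div_iff₀ hr (by positivity)]
    have h2 : 1 - Real.exp (-‖x‖ ^ 2 / (4 * (1 + t))) ≤ ‖x‖ ^ 2 / (4 * (1 + t)) := by linarith
    calc 1 / (2 * π) * (1 - Real.exp (-‖x‖ ^ 2 / (4 * (1 + t)))) * (8 * π * (1 + t))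
        ≤ 1 / (2 * π) * (‖x‖ ^ 2 / (4 * (1 + t))) * (8 * π * (1 + t)) := by
          apply mul_le_mul_of_nonneg_right _ (by positivity)
          apply mul_le_mul_of_nonneg_left h2 (by positivity)
      _ = ‖x‖ * ‖x‖ := by field_simp; ring

/-- For every `t ≥ 0` and `x ≠ 0`,
`|Θ(x,t)| ≤ min(1/(2π|x|), |x|/(8π(1+t)))`; consequently `Θ(·,t)` belongs to
weak-`L²` with `sup_{λ>0} λ (meas{|Θ(·,t)| > λ})^{1/2} ≤ 1/(2√π)`. -/
theorem Theta_pointwise_and_weakL2 (t : ℝ) (ht : 0 ≤ t) :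
    (∀ x : E2, x ≠ 0 →
      ‖Theta t x‖ ≤ min (1 / (2 * π * ‖x‖)) (‖x‖ / (8 * π * (1 + t)))) ∧
    ∀ l : ℝ, 0 < l →
      ENNReal.ofReal l * (volume {x : E2 | l < ‖Theta t x‖}) ^ ((1 : ℝ) / 2) ≤
        ENNReal.ofReal (1 / (2 * Real.sqrt π)) := by
  refine ⟨Theta_pointwise' t ht, fun l hl => ?_⟩
  have hπ := Real.pi_pos
  set r := 1/(2*π*l) with hrdef
  have hr : 0 < r := by positivity
  have hsub : {x : E2 | l < ‖Theta t x‖} ⊆ Metric.ball 0 r := by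
    intro x hx
    simp only [Set.mem_setOf_eq] at hx
    rcases eq_or_ne x 0 with rfl | hx0
    · rw [Theta, perp_zero', smul_zero, norm_zero] at hx
      exact absurd hx (not_lt.mpr hl.le)
    · have hxr : 0 < ‖x‖ := norm_pos_iff.mpr hx0
      have hb := lt_of_lt_of_le hx
        ((Theta_pointwise' t ht x hx0).trans (min_le_left _ _))
      rw [Metric.mem_ball, dist_zero_right, hrdef, lt_div_iff₀ (by positivity)]
      rw [lt_div_iff₀ (by positivity)] at hb
      nlinarith
  have hball : volume (Metric.ball (0 : E2) r) =
      ENNReal.ofReal ((r * Real.sqrt π) ^ 2) := by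
    rw [EuclideanSpace.volume_ball]
    simp only [Fintype.card_fin]
    rw [show ((2:ℕ):ℝ)/2 + 1 = 2 by norm_num, Real.Gamma_two]
    rw [← ENNReal.ofReal_pow hr.le, ← ENNReal.ofReal_mul (by positivity)]
    congr 1
    rw [Real.sq_sqrt hπ.le]
    ring_nf
    rw [Real.sq_sqrt hπ.le]
  calc ENNReal.ofReal l * (volume {x : E2 | l < ‖Theta t x‖}) ^ ((1:ℝ)/2)
      ≤ ENNReal.ofReal l * (volume (Metric.ball (0 : E2) r)) ^ ((1:ℝ)/2) := by
        exact mul_le_mul_right (ENNReal.rpow_le_rpow (measure_mono hsub) (by norm_num)) _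
    _ = ENNReal.ofReal l * ENNReal.ofReal (r * Real.sqrt π) := by
        rw [hball, show ((r * Real.sqrt π) ^ 2 : ℝ) = (r * Real.sqrt π) ^ (2:ℝ) by
          rw [← Real.rpow_natCast (r * Real.sqrt π) 2]; norm_num]
        rw [ENNReal.ofReal_rpow_of_nonneg (by positivity) (by norm_num : (0:ℝ) ≤ 1/2)]
        congr 1
        rw [← Real.rpow_mul (by positivity)]
        norm_num
    _ = ENNReal.ofReal (1 / (2 * Real.sqrt π)) := by
        rw [← ENNReal.ofReal_mul hl.le]
        congr 1
        rw [hrdef]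
        have hs := Real.sqrt_pos.mpr hπ
        field_simp
        nlinarith [Real.mul_self_sqrt hπ.le]


end
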